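/- Let n ≥ 3 be odd and set a := log(1 + √2). Then the multiset of complex roots (with multiplicity) of the permanental polynomial π(C_n, x) of the cycle C_n equals { 2·sinh((a + 2πik)/n) : k = 0, 1, …, n−1 }, where sinh is the complex hyperbolic sine and i is the imaginary unit. -/

import Mathlib

open Polynomial Matrix

/-- The permanental polynomial `per(x·I − A)` of a square matrix `A`. -/
noncomputable def permPoly {n : ℕ} {R : Type*} [CommRing R] (A : Matrix (Fin n) (Fin n) R) :
    Polynomial R :=
  ((Polynomial.X : R[X]) • (1 : Matrix (Fin n) (Fin n) R[X]) - A.map Polynomial.C).permanent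

/-- The permanental polynomial `π(G,x) = per(x·I − A(G))` of a graph, over `ℂ`. -/
noncomputable def graphPermPoly {n : ℕ} (G : SimpleGraph (Fin n)) : Polynomial ℂ :=
  letI := Classical.decRel G.Adj
  permPoly (G.adjMatrix ℂ)

/-- The permanental energy `E_per(G)`: the sum of the moduli of the roots (with
multiplicity) of the permanental polynomial of `G`. -/
noncomputable def perEnergy {n : ℕ} (G : SimpleGraph (Fin n)) : ℝ :=
  ((graphPermPoly G).roots.map (fun z : ℂ => ‖z‖)).sum

/-!
Let `W(c, d)` be the cycle matrix with weight `c` on the arcs `i → i + 1` and `d` on the arcs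
`i + 1 → i`. In the expansions of `per (X - A(Cₙ))` and `det (X - W(c, d))` only permutations
moving every vertex to itself or to a neighbour survive, and for `n ≥ 3` these are the involutions
(products of disjoint adjacent transpositions) and the two rotations. If `c * d = -1`, every
transposition contributes `1` to the permanent and `c * d = -1` to the determinant, which the
sign of the permutation compensates; so the two polynomials differ only by the rotation terms,
and these cancel when `n` is odd and `cⁿ + dⁿ = 2`. Hence `π(Cₙ)` is the characteristic
polynomial of the circulant `W(c, d)`, whose eigenvalues `c ζᵏ + d ζ⁻ᵏ` are read off from the
Fourier (Vandermonde) matrix. With `c = e^(a/n)`, `d = -e^(-a/n)` and `sinh a = 1`, i.e.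
`a = arsinh 1 = log (1 + √2)`, they are `2 sinh ((a + 2πik)/n)`.
-/

open Equiv Finset

theorem Equiv.Perm.involutive_swap_mul {α : Type*} [DecidableEq α] {σ : Perm α}
    (hσ : Function.Involutive σ) (i : α) : Function.Involutive (swap i (σ i) * σ) := by
  have hσσ : σ * σ = 1 := Equiv.ext hσ
  have h : swap i (σ i) * σ * (swap i (σ i) * σ) = 1 := by
    rw [mul_assoc, ← mul_assoc σ, mul_swap_eq_swap_mul, hσ i, swap_comm, mul_assoc, hσσ,
      mul_one, swap_mul_self]
  exact fun k => congrArg (· k) h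

namespace Matrix

variable {α R : Type*} [Fintype α] [DecidableEq α] [CommRing R]

theorem prod_perm_eq_sign_smul_of_involutive_of_diag_eq_one {M N : Matrix α α R}
    (hM : ∀ i, M i i = 1) (hN : ∀ i, N i i = 1)
    (hMN : ∀ i j, i ≠ j → M i j * M j i = -(N i j * N j i)) {σ : Perm α}
    (hσ : Function.Involutive σ) : ∏ k, M (σ k) k = Perm.sign σ • ∏ k, N (σ k) k := by
  induction h : #σ.support using Nat.strong_induction_on generalizing σ with
  | _ m ih =>
  by_cases hone : σ = 1
  · simp [hone, hM, hN]
  obtain ⟨i, hi⟩ : ∃ i, σ i ≠ i := by simpa [Equiv.ext_iff] using hone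
  have hcard := Perm.card_support_swap_mul hi
  have hσ' := Perm.involutive_swap_mul hσ i
  obtain ⟨j, hij⟩ : ∃ j, σ i = j := ⟨_, rfl⟩
  have hji : σ j = i := hij ▸ hσ i
  rw [hij] at hi hcard hσ'
  -- `σ'` is `σ` with the 2-cycle `(i j)` removed
  set σ' := Equiv.swap i j * σ
  have hσ'i : σ' i = i := by simp [σ', hij]
  have hσ'j : σ' j = j := by simp [σ', hji]
  have hσ'_of_ne : ∀ k, k ≠ i → k ≠ j → σ' k = σ k := fun k hki hkj =>
    swap_apply_of_ne_of_ne (fun h => hkj (by rw [← hσ k, h, hij]))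
      (fun h => hki (by rw [← hσ k, h, hji]))
  have peel : ∀ A : Matrix α α R, (∀ i, A i i = 1) →
      ∏ k, A (σ k) k = A j i * A i j * ∏ k, A (σ' k) k := by
    intro A hA
    have hrest : ∏ k ∈ {i, j}ᶜ, A (σ k) k = ∏ k ∈ {i, j}ᶜ, A (σ' k) k :=
      prod_congr rfl fun k hk => by
        simp only [mem_compl, mem_insert, mem_singleton, not_or] at hk
        rw [hσ'_of_ne k hk.1 hk.2]
    rw [← prod_mul_prod_compl {i, j}, ← prod_mul_prod_compl {i, j} (fun k => A (σ' k) k),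
      prod_pair hi.symm, prod_pair hi.symm, hij, hji, hσ'i, hσ'j, hA, hA, hrest, one_mul, one_mul]
  rw [peel M hM, peel N hN, ih _ (h ▸ hcard) hσ' rfl, Perm.sign_mul, Perm.sign_swap hi.symm,
    hMN j i hi]
  simp only [Units.smul_def, zsmul_eq_mul]
  push_cast
  ring

theorem prod_perm_eq_sign_smul_of_involutive {M N : Matrix α α R} (hdiag : ∀ i, M i i = N i i)
    (hMN : ∀ i j, i ≠ j → M i j * M j i = -(N i j * N j i)) {σ : Perm α}
    (hσ : Function.Involutive σ) : ∏ k, M (σ k) k = Perm.sign σ • ∏ k, N (σ k) k := by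
  let offDiag (A : Matrix α α R) : Matrix α α R := of fun i j => if i = j then 1 else A i j
  have split : ∀ A : Matrix α α R, ∏ k, A (σ k) k =
      (∏ k, offDiag A (σ k) k) * ∏ k, if σ k = k then A k k else 1 := by
    intro A
    rw [← prod_mul_distrib]
    refine prod_congr rfl fun k _ => ?_
    by_cases h : σ k = k <;> simp [offDiag, h]
  have hoff := prod_perm_eq_sign_smul_of_involutive_of_diag_eq_one (M := offDiag M)
    (N := offDiag N) (by simp [offDiag]) (by simp [offDiag])
    (fun i j hij => by simpa [offDiag, hij, hij.symm] using hMN i j hij) hσ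
  rw [split M, split N, hoff, smul_mul_assoc]
  simp_rw [hdiag]

end Matrix

theorem Polynomial.roots_finset_prod_X_sub_C {R ι : Type*} [CommRing R] [IsDomain R]
    (s : Finset ι) (f : ι → R) : (∏ k ∈ s, (X - C (f k))).roots = s.val.map f := by
  rw [prod_eq_multiset_prod]
  simpa only [Multiset.map_map, Function.comp_def] using roots_multiset_prod_X_sub_C (s.val.map f)

theorem Equiv.addRight_inv_apply {G : Type*} [AddGroup G] (a x : G) :
    (Equiv.addRight a)⁻¹ x = x - a :=
  Perm.inv_eq_iff_eq.mpr (sub_add_cancel x a).symm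

section CycleMatrices

open Fin.CommRing

variable {n : ℕ} [NeZero n]

namespace Fin

theorem two_ne_zero_of_three_le (hn : 3 ≤ n) : (2 : Fin n) ≠ 0 := by
  simp [Fin.ext_iff, Nat.mod_eq_of_lt (show 2 < n by omega)]

theorem add_one_ne_self (hn : 2 ≤ n) (i : Fin n) : i + 1 ≠ i := by
  have := Fin.nontrivial_iff_two_le.mpr hn
  simp

theorem sub_one_ne_self (hn : 2 ≤ n) (i : Fin n) : i - 1 ≠ i := by
  have := Fin.nontrivial_iff_two_le.mpr hn
  simp

theorem add_one_add_one_ne_self (hn : 3 ≤ n) (i : Fin n) : i + 1 + 1 ≠ i := fun h =>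
  two_ne_zero_of_three_le hn (by linear_combination h)

theorem forall_of_imp_add_one {p : Fin n → Prop} (hstep : ∀ x, p x → p (x + 1)) {i : Fin n}
    (hi : p i) (x : Fin n) : p x := by
  have hk : ∀ k : ℕ, p (i + k) := by
    intro k
    induction k with
    | zero => simpa using hi
    | succ k ih => simpa [add_assoc] using hstep _ ih
  simpa using hk (x - i).val

end Fin

def IsNeighbourPerm (σ : Perm (Fin n)) : Prop :=
  ∀ i, σ i = i ∨ σ i = i + 1 ∨ σ i = i - 1

theorem IsNeighbourPerm.inv {σ : Perm (Fin n)} (hσ : IsNeighbourPerm σ) :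
    IsNeighbourPerm σ⁻¹ := by
  intro j
  obtain ⟨i, rfl⟩ := σ.surjective j
  rw [Perm.inv_eq_iff_eq.mpr rfl]
  rcases hσ i with h | h | h
  · exact .inl h.symm
  · exact .inr (.inr (eq_sub_of_add_eq h.symm))
  · exact .inr (.inl (eq_add_of_sub_eq h.symm))

theorem IsNeighbourPerm.eq_addRight_one (hn : 3 ≤ n) {σ : Perm (Fin n)}
    (hσ : IsNeighbourPerm σ) {i : Fin n} (hi : σ i = i + 1) (hi' : σ (i + 1) ≠ i) :
    σ = Equiv.addRight 1 := by
  suffices h : ∀ x, σ x = x + 1 ∧ σ (x + 1) ≠ x from Equiv.ext fun x => (h x).1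
  refine Fin.forall_of_imp_add_one (fun x ⟨hx, hx'⟩ => ?_) ⟨hi, hi'⟩
  have hx1 : σ (x + 1) = x + 1 + 1 := by
    rcases hσ (x + 1) with h | h | h
    · exact absurd (σ.injective (h.trans hx.symm)) (Fin.add_one_ne_self (by omega) x)
    · exact h
    · exact absurd (h.trans (add_sub_cancel_right x 1)) hx'
  exact ⟨hx1, fun h => Fin.add_one_add_one_ne_self hn x (σ.injective (h.trans hx.symm))⟩

theorem IsNeighbourPerm.involutive_or (hn : 3 ≤ n) {σ : Perm (Fin n)}
    (hσ : IsNeighbourPerm σ) :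
    Function.Involutive σ ∨ σ = Equiv.addRight 1 ∨ σ = (Equiv.addRight 1)⁻¹ := by
  refine or_iff_not_imp_left.mpr fun hinv => ?_
  obtain ⟨i, hi⟩ : ∃ i, σ (σ i) ≠ i := by simpa [Function.Involutive] using hinv
  rcases hσ i with h | h | h
  · exact absurd (by rw [h, h]) hi
  · exact .inl (hσ.eq_addRight_one hn h (h ▸ hi))
  · refine .inr (inv_eq_iff_eq_inv.mp (hσ.inv.eq_addRight_one hn (i := i - 1) ?_ ?_))
    · rw [Perm.inv_eq_iff_eq, sub_add_cancel, h]
    · rw [Ne, Perm.inv_eq_iff_eq, sub_add_cancel, ← h]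
      exact Ne.symm hi

theorem Fin.addRight_one_ne_inv (hn : 3 ≤ n) :
    Equiv.addRight (1 : Fin n) ≠ (Equiv.addRight 1)⁻¹ := by
  intro h
  have := congrArg (· 0) h
  simp only [coe_addRight, zero_add, Equiv.addRight_inv_apply, zero_sub] at this
  exact Fin.two_ne_zero_of_three_le hn (by linear_combination this)

theorem Fin.sign_addRight_one_of_odd (hodd : Odd n) :
    Perm.sign (Equiv.addRight (1 : Fin n)) = 1 := by
  have h : Equiv.addRight (1 : Fin n) = finRotate n := by
    ext x
    simp [finRotate_apply]
  rw [h, sign_finRotate, (Nat.Odd.sub_odd hodd odd_one).neg_one_pow]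

variable {R : Type*} [CommRing R]

theorem permanent_sub_det_eq_sum_rotations (hn : 3 ≤ n) {M N : Matrix (Fin n) (Fin n) R}
    (hM : ∀ i j, j ≠ i → j ≠ i + 1 → j ≠ i - 1 → M j i = 0)
    (hN : ∀ i j, j ≠ i → j ≠ i + 1 → j ≠ i - 1 → N j i = 0)
    (hdiag : ∀ i, M i i = N i i) (hMN : ∀ i j, i ≠ j → M i j * M j i = -(N i j * N j i)) :
    M.permanent - N.det = ∑ σ ∈ {Equiv.addRight 1, (Equiv.addRight 1)⁻¹},
      (∏ i, M (σ i) i - Perm.sign σ • ∏ i, N (σ i) i) := by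
  rw [permanent, det_apply, ← sum_sub_distrib]
  refine (sum_subset (subset_univ _) fun σ _ hσ => ?_).symm
  simp only [mem_insert, mem_singleton, not_or] at hσ
  by_cases hloc : IsNeighbourPerm σ
  · rcases hloc.involutive_or hn with hinv | h | h
    · exact sub_eq_zero.mpr (prod_perm_eq_sign_smul_of_involutive hdiag hMN hinv)
    · exact absurd h hσ.1
    · exact absurd h hσ.2
  · obtain ⟨i, hi⟩ := not_forall.mp hloc
    simp only [not_or] at hi
    rw [prod_eq_zero (f := fun k => M (σ k) k) (mem_univ i) (hM _ _ hi.1 hi.2.1 hi.2.2),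
      prod_eq_zero (f := fun k => N (σ k) k) (mem_univ i) (hN _ _ hi.1 hi.2.1 hi.2.2),
      smul_zero, sub_zero]

def weightedCycle (c d : R) : Matrix (Fin n) (Fin n) R :=
  of fun i j => (if j = i + 1 then c else 0) + (if i = j + 1 then d else 0)

variable (c d : R)

theorem weightedCycle_add_one_apply (hn : 3 ≤ n) (i : Fin n) :
    weightedCycle c d (i + 1) i = d := by
  simp [weightedCycle, (Fin.add_one_add_one_ne_self hn i).symm]

theorem weightedCycle_sub_one_apply (hn : 3 ≤ n) (i : Fin n) :
    weightedCycle c d (i - 1) i = c := by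
  have : i - 1 ≠ i + 1 := fun h =>
    Fin.add_one_add_one_ne_self hn (i - 1) (by linear_combination -h)
  simp [weightedCycle, this]

theorem weightedCycle_apply_of_ne {i j : Fin n} (h₁ : j ≠ i + 1) (h₂ : j ≠ i - 1) :
    weightedCycle c d j i = 0 := by
  have h₃ : i ≠ j + 1 := fun h => h₂ (eq_sub_of_add_eq h.symm)
  simp [weightedCycle, h₁, h₃]

theorem weightedCycle_mul_weightedCycle_swap (hn : 3 ≤ n) (i j : Fin n) :
    weightedCycle c d i j * weightedCycle c d j i =
      if j = i + 1 ∨ i = j + 1 then c * d else 0 := by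
  by_cases h₁ : j = i + 1
  · subst h₁
    simp [weightedCycle, (Fin.add_one_add_one_ne_self hn i).symm]
  by_cases h₂ : i = j + 1
  · subst h₂
    simp [weightedCycle, (Fin.add_one_add_one_ne_self hn j).symm, mul_comm]
  simp [weightedCycle, h₁, h₂]

theorem prod_charmatrix_weightedCycle_addRight_one (hn : 3 ≤ n) :
    ∏ i, charmatrix (weightedCycle c d) (Equiv.addRight (1 : Fin n) i) i = (-C d) ^ n := by
  have h (i : Fin n) : charmatrix (weightedCycle c d) (Equiv.addRight 1 i) i = -C d := by
    rw [coe_addRight, charmatrix_apply_ne _ _ _ (Fin.add_one_ne_self (by omega) i),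
      weightedCycle_add_one_apply c d hn]
  simp only [h, prod_const, card_univ, Fintype.card_fin]

theorem prod_charmatrix_weightedCycle_addRight_one_inv (hn : 3 ≤ n) :
    ∏ i, charmatrix (weightedCycle c d) ((Equiv.addRight (1 : Fin n))⁻¹ i) i = (-C c) ^ n := by
  have h (i : Fin n) : charmatrix (weightedCycle c d) ((Equiv.addRight 1)⁻¹ i) i = -C c := by
    rw [Equiv.addRight_inv_apply, charmatrix_apply_ne _ _ _ (Fin.sub_one_ne_self (by omega) i),
      weightedCycle_sub_one_apply c d hn]
  simp only [h, prod_const, card_univ, Fintype.card_fin]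

omit [NeZero n] in
theorem permPoly_eq_permanent_charmatrix (A : Matrix (Fin n) (Fin n) R) :
    permPoly A = (charmatrix A).permanent := by
  rw [permPoly]
  congr 1
  ext i j
  by_cases h : i = j <;> simp [h, one_apply]

theorem weightedCycle_apply_self (hn : 2 ≤ n) (i : Fin n) : weightedCycle c d i i = 0 :=
  weightedCycle_apply_of_ne c d (Fin.add_one_ne_self hn i).symm (Fin.sub_one_ne_self hn i).symm

theorem charmatrix_weightedCycle_apply_of_ne (i j : Fin n) (h₀ : j ≠ i) (h₁ : j ≠ i + 1)
    (h₂ : j ≠ i - 1) : charmatrix (weightedCycle c d) j i = 0 := by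
  rw [charmatrix_apply_ne _ _ _ h₀, weightedCycle_apply_of_ne c d h₁ h₂, C_0, neg_zero]

theorem charmatrix_weightedCycle_apply_self (hn : 2 ≤ n) (i : Fin n) :
    charmatrix (weightedCycle c d) i i = X := by
  rw [charmatrix_apply_eq, weightedCycle_apply_self c d hn, C_0, sub_zero]

theorem charmatrix_weightedCycle_mul_swap (hn : 3 ≤ n) {i j : Fin n} (hij : i ≠ j) :
    charmatrix (weightedCycle c d) i j * charmatrix (weightedCycle c d) j i =
      C (if j = i + 1 ∨ i = j + 1 then c * d else 0) := by
  rw [charmatrix_apply_ne _ _ _ hij, charmatrix_apply_ne _ _ _ hij.symm, neg_mul_neg, ← C_mul,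
    weightedCycle_mul_weightedCycle_swap c d hn]

theorem permPoly_weightedCycle_one_one (hn : 3 ≤ n) (hodd : Odd n) {c d : R} (hcd : c * d = -1)
    (hsum : c ^ n + d ^ n = 2) :
    permPoly (weightedCycle (n := n) (1 : R) 1) = (weightedCycle (n := n) c d).charpoly := by
  have hrot := congrArg C hsum
  rw [C_add, C_pow, C_pow, map_ofNat] at hrot
  rw [permPoly_eq_permanent_charmatrix, charpoly, ← sub_eq_zero,
    permanent_sub_det_eq_sum_rotations hn (charmatrix_weightedCycle_apply_of_ne 1 1)
      (charmatrix_weightedCycle_apply_of_ne c d)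
      (fun i => by rw [charmatrix_weightedCycle_apply_self _ _ (by omega),
        charmatrix_weightedCycle_apply_self _ _ (by omega)])
      (fun i j hij => ?_),
    sum_pair (Fin.addRight_one_ne_inv hn), prod_charmatrix_weightedCycle_addRight_one 1 1 hn,
    prod_charmatrix_weightedCycle_addRight_one c d hn,
    prod_charmatrix_weightedCycle_addRight_one_inv 1 1 hn,
    prod_charmatrix_weightedCycle_addRight_one_inv c d hn, map_inv,
    Fin.sign_addRight_one_of_odd hodd, inv_one, one_smul, one_smul]
  · rw [hodd.neg_pow, hodd.neg_pow, hodd.neg_pow, C_1, one_pow]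
    linear_combination hrot
  · rw [charmatrix_weightedCycle_mul_swap 1 1 hn hij, charmatrix_weightedCycle_mul_swap c d hn hij,
      hcd]
    split_ifs <;> simp

theorem adjMatrix_cycleGraph (hn : 3 ≤ n) [DecidableRel (SimpleGraph.cycleGraph n).Adj] :
    (SimpleGraph.cycleGraph n).adjMatrix R = weightedCycle 1 1 := by
  have hone : ((1 : Fin n) : ℕ) = 1 := by simp [Nat.mod_eq_of_lt (by omega : 1 < n)]
  have hadj (u v : Fin n) : (SimpleGraph.cycleGraph n).Adj u v ↔ u = v + 1 ∨ v = u + 1 := by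
    rw [SimpleGraph.cycleGraph_adj', ← hone, ← Fin.ext_iff, ← Fin.ext_iff, sub_eq_iff_eq_add,
      sub_eq_iff_eq_add, add_comm 1, add_comm 1]
  ext i j
  rw [SimpleGraph.adjMatrix_apply]
  by_cases h₁ : j = i + 1
  · subst h₁
    simp [weightedCycle, hadj, (Fin.add_one_add_one_ne_self hn i).symm]
  by_cases h₂ : i = j + 1
  · subst h₂
    simp [weightedCycle, hadj, (Fin.add_one_add_one_ne_self hn j).symm]
  simp [weightedCycle, hadj, h₁, h₂]

theorem charpoly_weightedCycle {K : Type*} [Field K] {ζ : K} (hζ : IsPrimitiveRoot ζ n)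
    (c d : K) : (weightedCycle (n := n) c d).charpoly =
      ∏ k : Fin n, (X - C (c * ζ ^ (k : ℕ) + d * ζ⁻¹ ^ (k : ℕ))) := by
  set χ : Fin n → K := fun i => ζ ^ (i : ℕ)
  have hχ_add (i j : Fin n) : χ (i + j) = χ i * χ j := by
    simp only [χ, Fin.val_add, ← pow_eq_pow_mod _ hζ.pow_eq_one, pow_add]
  have hχ_one : χ 1 = ζ := by
    simp only [χ, Fin.val_one', ← pow_eq_pow_mod _ hζ.pow_eq_one, pow_one]
  have hχ_neg_one : χ (-1) = ζ⁻¹ := by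
    have h := hχ_add (-1) 1
    rw [neg_add_cancel, hχ_one] at h
    exact eq_inv_of_mul_eq_one_left (by simpa [χ] using h.symm)
  set μ : Fin n → K := fun k => c * ζ ^ (k : ℕ) + d * ζ⁻¹ ^ (k : ℕ)
  have hWF : weightedCycle c d * vandermonde χ = vandermonde χ * diagonal μ := by
    ext j k
    have hprev (x : Fin n) : j = x + 1 ↔ x = j + -1 := by
      rw [← sub_eq_add_neg, eq_sub_iff_add_eq, eq_comm]
    rw [mul_diagonal]
    simp only [mul_apply, weightedCycle, of_apply, add_mul, ite_mul, zero_mul,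
      sum_add_distrib, hprev, sum_ite_eq', mem_univ, if_true, vandermonde_apply, hχ_add, hχ_one,
      hχ_neg_one, μ]
    ring
  have hdet : IsUnit (vandermonde χ).det := (det_vandermonde_ne_zero_iff.mpr
    fun i j h => Fin.ext (hζ.pow_inj i.isLt j.isLt h)).isUnit
  have hconj : weightedCycle c d = vandermonde χ * diagonal μ * (vandermonde χ)⁻¹ := by
    rw [← hWF, mul_assoc, mul_nonsing_inv _ hdet, mul_one]
  rw [hconj, ← charpoly_diagonal]
  exact charpoly_units_conj ((isUnit_iff_isUnit_det _).mpr hdet).unit (diagonal μ)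

end CycleMatrices

section

open Complex

theorem permPoly_weightedCycle_one_one_eq_prod_two_sinh {n : ℕ} [NeZero n] (hn : 3 ≤ n)
    (hodd : Odd n) {u : ℂ} (hu : sinh u = 1) :
    permPoly (weightedCycle (n := n) (1 : ℂ) 1) =
      ∏ k : Fin n, (X - C (2 * sinh ((u + 2 * Real.pi * I * (k : ℕ)) / n))) := by
  have hn0 : (n : ℂ) ≠ 0 := Nat.cast_ne_zero.mpr (NeZero.ne n)
  have hcd : exp (u / n) * -exp (-u / n) = -1 := by
    rw [mul_neg, ← exp_add, neg_div, add_neg_cancel, exp_zero]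
  have hsum : exp (u / n) ^ n + (-exp (-u / n)) ^ n = 2 := by
    rw [hodd.neg_pow, ← exp_nat_mul, ← exp_nat_mul, mul_div_cancel₀ _ hn0,
      mul_div_cancel₀ _ hn0, ← sub_eq_add_neg, ← two_sinh, hu, mul_one]
  rw [permPoly_weightedCycle_one_one hn hodd hcd hsum,
    charpoly_weightedCycle (isPrimitiveRoot_exp n (NeZero.ne n))]
  refine prod_congr rfl fun k _ => ?_
  have h₁ : u / n + k * (2 * Real.pi * I / n) = (u + 2 * Real.pi * I * k) / n := by ring
  have h₂ : -u / n + k * -(2 * Real.pi * I / n) = -((u + 2 * Real.pi * I * k) / n) := by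
    ring
  rw [two_sinh, ← exp_neg, ← exp_nat_mul, ← exp_nat_mul, neg_mul, ← exp_add, ← exp_add, h₁,
    h₂, ← sub_eq_add_neg]

end

/-- **Permanental roots of odd cycles.** For odd `n ≥ 3`, with `a := log(1+√2)`, the
multiset of roots of `π(C_n,x)` is `{ 2·sinh((a + 2πik)/n) : k = 0, …, n−1 }`. -/
theorem permanental_roots_odd_cycle {n : ℕ} (hn : 3 ≤ n) (hodd : Odd n) :
    (graphPermPoly (SimpleGraph.cycleGraph n)).roots =
      Multiset.map
        (fun k : Fin n =>
          2 * Complex.sinh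
            (((Real.log (1 + Real.sqrt 2) : ℂ) +
              2 * (Real.pi : ℂ) * Complex.I * ((k : ℕ) : ℂ)) / (n : ℂ)))
        (Finset.univ : Finset (Fin n)).val := by
  have : NeZero n := ⟨by omega⟩
  have hsinh : Complex.sinh (Real.log (1 + Real.sqrt 2) : ℂ) = 1 := by
    rw [← Complex.ofReal_sinh, show Real.log (1 + Real.sqrt 2) = Real.arsinh 1 by
      norm_num [Real.arsinh], Real.sinh_arsinh, Complex.ofReal_one]
  -- `graphPermPoly` uses the classical decidability instance of the adjacency relation
  rw [graphPermPoly, @adjMatrix_cycleGraph n _ ℂ _ hn (Classical.decRel _),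
    permPoly_weightedCycle_one_one_eq_prod_two_sinh hn hodd hsinh, roots_finset_prod_X_sub_C]
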